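/- arXiv:2410.13965 — 3 statements merged into one kernel-verified Lean document; each statement's English description precedes it below -/
import Mathlib

section
/- (Normal-families rigidity) For every R > 0 and ε > 0 there exists δ ∈ (0,1) such that for every holomorphic F : ℍ → ℍ with F(1) = 1 and F'(1) ∈ (1-δ, 1) (real), one has |F'(ζ) - 1| < ε for all ζ in the closed hyperbolic disk of radius R centered at 1 in ℍ. -/
/-!
Conjugating by the Cayley transform `z ↦ (z - 1) / (z + 1)` turns `F` into a self-map `f` of the
unit disk with `f 0 = 0` and `f' 0 = F' 1`. Schwarz–Pick applied to `dslope f 0`, whose value at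
`0` is `f' 0`, shows that `dslope f 0` stays within `O(1 - f' 0)` of `1` on each smaller disk, so
`f` is uniformly close to the identity there and, by Cauchy's estimate, so is `f'` to `1`. The
Cayley transform maps the hyperbolic disk of radius `R` about `1` into the disk of radius
`tanh (R / 2)`, and the chain rule carries the estimate back to `F'`.
-/

open Set Filter

def HalfPlane : Set ℂ := {z : ℂ | 0 < z.re}

noncomputable def pdistH (z w : ℂ) : ℝ :=
  ‖z - w‖ / ‖z + (starRingEnd ℂ) w‖

noncomputable def hdistH (z w : ℂ) : ℝ :=
  Real.log ((1 + pdistH z w) / (1 - pdistH z w))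

open Metric ComplexConjugate

theorem Complex.norm_sub_le_norm_one_sub_conj_mul {a b : ℂ} (ha : ‖a‖ ≤ 1) (hb : ‖b‖ ≤ 1) :
    ‖b - a‖ ≤ ‖1 - conj a * b‖ := by
  have hsq : ‖1 - conj a * b‖ ^ 2 - ‖b - a‖ ^ 2 = (1 - ‖a‖ ^ 2) * (1 - ‖b‖ ^ 2) := by
    simp only [Complex.sq_norm, Complex.normSq_apply, Complex.sub_re, Complex.sub_im,
      Complex.mul_re, Complex.mul_im, Complex.conj_re, Complex.conj_im, Complex.one_re,
      Complex.one_im]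
    ring
  have : 0 ≤ (1 - ‖a‖ ^ 2) * (1 - ‖b‖ ^ 2) :=
    mul_nonneg (by nlinarith [norm_nonneg a]) (by nlinarith [norm_nonneg b])
  exact pow_le_pow_iff_left₀ (norm_nonneg _) (norm_nonneg _) two_ne_zero |>.mp (by linarith)

theorem Complex.norm_sub_apply_zero_le_of_mapsTo_ball {g : ℂ → ℂ}
    (hg : DifferentiableOn ℂ g (ball 0 1)) (hmaps : MapsTo g (ball 0 1) (closedBall 0 1))
    (h₀ : ‖g 0‖ < 1) {w : ℂ} (hw : w ∈ ball 0 1) :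
    ‖g w - g 0‖ ≤ ‖w‖ * ‖1 - conj (g 0) * g w‖ := by
  set a := g 0
  have hden : ∀ v ∈ ball (0 : ℂ) 1, 1 - conj a * g v ≠ 0 := by
    intro v hv hzero
    have : ‖conj a * g v‖ < 1 := by
      rw [norm_mul, Complex.norm_conj]
      exact mul_lt_one_of_nonneg_of_lt_one_left (norm_nonneg a) h₀
        (mem_closedBall_zero_iff.mp (hmaps hv))
    rw [← sub_eq_zero.mp hzero, norm_one] at this
    exact lt_irrefl _ this
  -- `g` followed by the disk automorphism taking `a` to `0`, to which Schwarz's lemma applies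
  set h : ℂ → ℂ := fun v ↦ (g v - a) / (1 - conj a * g v)
  have hh : DifferentiableOn ℂ h (ball 0 1) :=
    (hg.sub_const a).div ((differentiableOn_const 1).sub (hg.const_mul _)) hden
  have hh_maps : MapsTo h (ball 0 1) (closedBall 0 1) := fun v hv ↦ by
    rw [mem_closedBall_zero_iff, norm_div, div_le_one (norm_pos_iff.mpr (hden v hv))]
    exact Complex.norm_sub_le_norm_one_sub_conj_mul h₀.le (mem_closedBall_zero_iff.mp (hmaps hv))
  have h₀' : h 0 = 0 := by simp [h, a]
  have := Complex.norm_le_norm_of_mapsTo_ball hh hh_maps h₀' (mem_ball_zero_iff.mp hw)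
  rwa [norm_div, div_le_iff₀ (norm_pos_iff.mpr (hden w hw))] at this

section SelfMapOfDisk

variable {f : ℂ → ℂ} (hf : DifferentiableOn ℂ f (ball 0 1))
  (hmaps : MapsTo f (ball 0 1) (ball 0 1)) (h₀ : f 0 = 0) (h' : ‖deriv f 0‖ < 1)
include hf hmaps h₀ h'

theorem norm_one_sub_dslope_mul_le {w : ℂ} (hw : w ∈ ball 0 1) :
    ‖1 - dslope f 0 w‖ * (1 - ‖w‖) ≤ ‖1 - deriv f 0‖ * (1 + ‖w‖) := by
  set g := dslope f 0
  have hg : DifferentiableOn ℂ g (ball 0 1) :=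
    (Complex.differentiableOn_dslope (ball_mem_nhds 0 one_pos)).mpr hf
  have hg_maps : MapsTo g (ball 0 1) (closedBall 0 1) := fun v hv ↦ by
    have hmaps' : MapsTo f (ball 0 1) (closedBall (f 0) 1) := by
      rw [h₀]; exact hmaps.mono_right ball_subset_closedBall
    simpa using Complex.norm_dslope_le_div_of_mapsTo_ball hf hmaps' hv
  have hg₀ : g 0 = deriv f 0 := dslope_same f 0
  set a := deriv f 0
  set b := g w
  have hb : ‖b‖ ≤ 1 := mem_closedBall_zero_iff.mp (hg_maps hw)
  have pick : ‖b - a‖ ≤ ‖w‖ * ‖1 - conj a * b‖ := by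
    simpa only [hg₀] using Complex.norm_sub_apply_zero_le_of_mapsTo_ball hg hg_maps
      (by rwa [hg₀]) hw
  have h1 : ‖1 - b‖ ≤ ‖1 - a‖ + ‖b - a‖ := by
    simpa only [norm_sub_rev a b] using norm_sub_le_norm_sub_add_norm_sub (1 : ℂ) a b
  have h2 : ‖1 - conj a * b‖ ≤ ‖1 - b‖ + ‖1 - a‖ := by
    have : 1 - conj a * b = (1 - b) + conj (1 - a) * b := by rw [map_sub, map_one]; ring
    calc ‖1 - conj a * b‖ ≤ ‖1 - b‖ + ‖1 - a‖ * ‖b‖ := by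
          rw [this, ← Complex.norm_conj (1 - a), ← norm_mul]; exact norm_add_le _ _
      _ ≤ ‖1 - b‖ + ‖1 - a‖ := by nlinarith [norm_nonneg (1 - a)]
  nlinarith [norm_nonneg w, norm_nonneg (1 - a)]

theorem norm_apply_sub_self_mul_le {w : ℂ} (hw : w ∈ ball 0 1) :
    ‖f w - w‖ * (1 - ‖w‖) ≤ 2 * ‖1 - deriv f 0‖ := by
  have hfw : f w - w = -(w * (1 - dslope f 0 w)) := by
    have := sub_smul_dslope f 0 w
    rw [h₀, sub_zero, sub_zero, smul_eq_mul] at this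
    rw [← this]; ring
  have hw1 : ‖w‖ < 1 := mem_ball_zero_iff.mp hw
  have key := norm_one_sub_dslope_mul_le hf hmaps h₀ h' hw
  rw [hfw, norm_neg, norm_mul, mul_assoc]
  calc ‖w‖ * (‖1 - dslope f 0 w‖ * (1 - ‖w‖)) ≤ 1 * (‖1 - deriv f 0‖ * (1 + ‖w‖)) :=
        mul_le_mul hw1.le key (by nlinarith [norm_nonneg (1 - dslope f 0 w)]) zero_le_one
    _ ≤ 2 * ‖1 - deriv f 0‖ := by nlinarith [norm_nonneg (1 - deriv f 0)]

theorem norm_deriv_sub_one_mul_le {z : ℂ} (hz : z ∈ ball 0 1) :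
    ‖deriv f z - 1‖ * (1 - ‖z‖) ^ 2 ≤ 8 * ‖1 - deriv f 0‖ := by
  have hz1 : ‖z‖ < 1 := mem_ball_zero_iff.mp hz
  set s := (1 - ‖z‖) / 2 with hs_def
  have hs : 0 < s := by linarith
  have hsub : closedBall z s ⊆ ball 0 1 := fun w hw ↦ by
    rw [mem_closedBall, dist_eq_norm] at hw
    rw [mem_ball_zero_iff]
    linarith [norm_le_norm_add_norm_sub' w z, hs_def]
  have hcauchy := Complex.norm_deriv_le_of_forall_mem_sphere_norm_le (f := fun w ↦ f w - w) hs
    ((hf.sub differentiableOn_id).diffContOnCl_ball hsub)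
    (C := 4 * ‖1 - deriv f 0‖ / (1 - ‖z‖)) fun w hw ↦ by
      rw [mem_sphere, dist_eq_norm] at hw
      have hw' : s ≤ 1 - ‖w‖ := by linarith [norm_le_norm_add_norm_sub' w z, hs_def]
      have := norm_apply_sub_self_mul_le hf hmaps h₀ h' (hsub (sphere_subset_closedBall
        (mem_sphere.mpr (by rw [dist_eq_norm, hw]))))
      rw [le_div_iff₀ (by linarith)]
      nlinarith [norm_nonneg (f w - w), norm_nonneg (1 - deriv f 0)]
  have hderiv : deriv (fun w ↦ f w - w) z = deriv f z - 1 :=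
    ((hf.differentiableAt (isOpen_ball.mem_nhds hz)).hasDerivAt.sub (hasDerivAt_id z)).deriv
  rw [hderiv, le_div_iff₀ hs, le_div_iff₀ (by linarith), hs_def] at hcauchy
  nlinarith [norm_nonneg (1 - deriv f 0)]

end SelfMapOfDisk

noncomputable def cayley (z : ℂ) : ℂ := (z - 1) / (z + 1)

noncomputable def cayleyInv (w : ℂ) : ℂ := (1 + w) / (1 - w)

theorem add_one_ne_zero_of_mem_halfPlane {z : ℂ} (hz : z ∈ HalfPlane) : z + 1 ≠ 0 := fun h ↦ by
  have hz' : 0 < z.re := hz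
  have := congrArg Complex.re h
  simp only [Complex.add_re, Complex.one_re, Complex.zero_re] at this
  linarith

theorem one_sub_ne_zero_of_mem_ball {w : ℂ} (hw : w ∈ ball (0 : ℂ) 1) : 1 - w ≠ 0 := fun h ↦ by
  rw [mem_ball_zero_iff, ← sub_eq_zero.mp h, norm_one] at hw
  exact lt_irrefl _ hw

theorem cayley_mapsTo : MapsTo cayley HalfPlane (ball 0 1) := fun z hz ↦ by
  have hz' : 0 < z.re := hz
  rw [mem_ball_zero_iff, cayley, norm_div,
    div_lt_one (norm_pos_iff.mpr (add_one_ne_zero_of_mem_halfPlane hz)),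
    ← sq_lt_sq₀ (norm_nonneg _) (norm_nonneg _), Complex.sq_norm, Complex.sq_norm,
    Complex.normSq_apply, Complex.normSq_apply]
  simp only [Complex.sub_re, Complex.add_re, Complex.sub_im, Complex.add_im, Complex.one_re,
    Complex.one_im]
  nlinarith

theorem cayleyInv_mapsTo : MapsTo cayleyInv (ball 0 1) HalfPlane := fun w hw ↦ by
  have hw' : ‖w‖ ^ 2 < 1 := by nlinarith [mem_ball_zero_iff.mp hw, norm_nonneg w]
  have hre : (cayleyInv w).re = (1 - ‖w‖ ^ 2) / Complex.normSq (1 - w) := by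
    rw [cayleyInv, Complex.div_re, Complex.sq_norm]
    simp only [Complex.normSq_apply, Complex.sub_re, Complex.add_re, Complex.sub_im,
      Complex.add_im, Complex.one_re, Complex.one_im]
    ring
  show 0 < (cayleyInv w).re
  rw [hre]
  exact div_pos (by linarith) (Complex.normSq_pos.mpr (one_sub_ne_zero_of_mem_ball hw))

theorem cayleyInv_cayley {z : ℂ} (hz : z + 1 ≠ 0) : cayleyInv (cayley z) = z := by
  rw [cayleyInv, cayley]
  field_simp
  ring

theorem one_sub_cayley {z : ℂ} (hz : z + 1 ≠ 0) : 1 - cayley z = 2 / (z + 1) := by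
  rw [cayley]; field_simp; ring

theorem hasDerivAt_cayley {z : ℂ} (hz : z + 1 ≠ 0) :
    HasDerivAt cayley ((1 - cayley z) ^ 2 / 2) z := by
  refine (((hasDerivAt_id z).sub_const 1).div ((hasDerivAt_id z).add_const 1) hz).congr_deriv ?_
  rw [one_sub_cayley hz, id]; field_simp; ring

theorem hasDerivAt_cayleyInv {w : ℂ} (hw : 1 - w ≠ 0) :
    HasDerivAt cayleyInv (2 / (1 - w) ^ 2) w := by
  refine (((hasDerivAt_id w).const_add 1).div ((hasDerivAt_id w).const_sub 1) hw).congr_deriv ?_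
  rw [id]; ring

theorem differentiableOn_cayley : DifferentiableOn ℂ cayley HalfPlane := fun _ hz ↦
  (hasDerivAt_cayley (add_one_ne_zero_of_mem_halfPlane hz)).differentiableAt.differentiableWithinAt

theorem differentiableOn_cayleyInv : DifferentiableOn ℂ cayleyInv (ball 0 1) := fun _ hw ↦
  (hasDerivAt_cayleyInv (one_sub_ne_zero_of_mem_ball hw)).differentiableAt.differentiableWithinAt

theorem pdistH_one_eq_norm_cayley (z : ℂ) : pdistH z 1 = ‖cayley z‖ := by
  rw [pdistH, cayley, map_one, norm_div]

theorem two_div_exp_add_one_le_one_sub_norm_cayley {z : ℂ} (hz : z ∈ HalfPlane) {R : ℝ}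
    (hR : hdistH z 1 ≤ R) : 2 / (Real.exp R + 1) ≤ 1 - ‖cayley z‖ := by
  have hp : ‖cayley z‖ < 1 := mem_ball_zero_iff.mp (cayley_mapsTo hz)
  rw [hdistH, pdistH_one_eq_norm_cayley,
    Real.log_le_iff_le_exp (div_pos (by positivity) (by linarith)),
    div_le_iff₀ (by linarith)] at hR
  rw [div_le_iff₀ (by positivity)]
  nlinarith

theorem norm_mul_sq_div_sq_sub_one_mul_le {A z w : ℂ} {κ : ℝ} (hz : ‖z‖ < 1)
    (hA : ‖A - 1‖ * (1 - ‖z‖) ^ 2 ≤ 8 * κ) (hw : ‖w - z‖ * (1 - ‖z‖) ≤ 2 * κ)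
    (hκ : 4 * κ ≤ (1 - ‖z‖) ^ 2) :
    ‖A * (1 - z) ^ 2 / (1 - w) ^ 2 - 1‖ * (1 - ‖z‖) ^ 4 ≤ 168 * κ := by
  set ρ := 1 - ‖z‖
  have hρ0 : 0 < ρ := by linarith
  have hρ1 : ρ ≤ 1 := by linarith [norm_nonneg z]
  have hκ0 : 0 ≤ κ := by nlinarith [norm_nonneg (w - z)]
  have hD : ρ ≤ ‖1 - z‖ := by
    have := norm_sub_norm_le (1 : ℂ) z
    rw [norm_one] at this
    linarith
  have hD' : ‖1 - z‖ ≤ 2 := by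
    have := norm_sub_le (1 : ℂ) z
    rw [norm_one] at this
    linarith
  have hu : ‖w - z‖ ≤ ρ / 2 := by nlinarith [norm_nonneg (w - z)]
  have hB : ρ / 2 ≤ ‖1 - w‖ := by
    have := norm_sub_norm_le (1 - z) (w - z)
    rw [show 1 - z - (w - z) = 1 - w by ring] at this
    linarith
  have hB' : ‖1 - w‖ ≤ 5 / 2 := by
    have := norm_sub_le (1 - z) (w - z)
    rw [show 1 - z - (w - z) = 1 - w by ring] at this
    linarith
  have hB0 : (1 - w) ≠ 0 := norm_pos_iff.mp (by linarith)
  have hnum : A * (1 - z) ^ 2 - (1 - w) ^ 2 =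
      (A - 1) * (1 - z) ^ 2 + (w - z) * ((1 - z) + (1 - w)) := by
    ring
  have hnum_le : ‖A * (1 - z) ^ 2 - (1 - w) ^ 2‖ * ρ ^ 2 ≤ 42 * κ := by
    have h1 : ‖A * (1 - z) ^ 2 - (1 - w) ^ 2‖ ≤ ‖A - 1‖ * 4 + ‖w - z‖ * 5 := by
      rw [hnum]
      refine (norm_add_le _ _).trans ?_
      rw [norm_mul, norm_mul, norm_pow]
      gcongr
      · nlinarith [norm_nonneg (1 - z)]
      · linarith [norm_add_le (1 - z) (1 - w)]
    calc ‖A * (1 - z) ^ 2 - (1 - w) ^ 2‖ * ρ ^ 2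
        ≤ 4 * (‖A - 1‖ * ρ ^ 2) + 5 * (‖w - z‖ * ρ) * ρ := by nlinarith
      _ ≤ 4 * (8 * κ) + 5 * (2 * κ) * 1 := by gcongr
      _ = 42 * κ := by ring
  have heq : A * (1 - z) ^ 2 / (1 - w) ^ 2 - 1 =
      (A * (1 - z) ^ 2 - (1 - w) ^ 2) / (1 - w) ^ 2 := by
    field_simp
  rw [heq, norm_div, norm_pow]
  have hB2 : ρ ^ 2 / 4 ≤ ‖1 - w‖ ^ 2 := by nlinarith
  rw [div_mul_eq_mul_div, div_le_iff₀ (by positivity)]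
  calc ‖A * (1 - z) ^ 2 - (1 - w) ^ 2‖ * ρ ^ 4
      = ‖A * (1 - z) ^ 2 - (1 - w) ^ 2‖ * ρ ^ 2 * ρ ^ 2 := by ring
    _ ≤ 42 * κ * (4 * ‖1 - w‖ ^ 2) := by gcongr; linarith
    _ = 168 * κ * ‖1 - w‖ ^ 2 := by ring

section SelfMapOfHalfPlane

variable {F : ℂ → ℂ} (hF : DifferentiableOn ℂ F HalfPlane) (hFm : MapsTo F HalfPlane HalfPlane)
include hF hFm

theorem differentiableOn_cayley_comp_comp_cayleyInv :
    DifferentiableOn ℂ (cayley ∘ F ∘ cayleyInv) (ball 0 1) :=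
  differentiableOn_cayley.comp (hF.comp differentiableOn_cayleyInv cayleyInv_mapsTo)
    (hFm.comp cayleyInv_mapsTo)

omit hF in
theorem mapsTo_cayley_comp_comp_cayleyInv :
    MapsTo (cayley ∘ F ∘ cayleyInv) (ball 0 1) (ball 0 1) :=
  cayley_mapsTo.comp (hFm.comp cayleyInv_mapsTo)

theorem deriv_eq_deriv_cayley_comp_comp_cayleyInv {z : ℂ} (hz : z ∈ HalfPlane) :
    deriv F z = deriv (cayley ∘ F ∘ cayleyInv) (cayley z) * (1 - cayley z) ^ 2 /
      (1 - (cayley ∘ F ∘ cayleyInv) (cayley z)) ^ 2 := by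
  set f := cayley ∘ F ∘ cayleyInv
  have hw := cayley_mapsTo hz
  have hf : HasDerivAt f (deriv f (cayley z)) (cayley z) :=
    ((differentiableOn_cayley_comp_comp_cayleyInv hF hFm).differentiableAt
      (isOpen_ball.mem_nhds hw)).hasDerivAt
  have hcomp := (hasDerivAt_cayleyInv (one_sub_ne_zero_of_mem_ball
    (mapsTo_cayley_comp_comp_cayleyInv hFm hw))).comp z
    (hf.comp z (hasDerivAt_cayley (add_one_ne_zero_of_mem_halfPlane hz)))
  have hF_eq : cayleyInv ∘ f ∘ cayley =ᶠ[nhds z] F := by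
    filter_upwards [(isOpen_lt continuous_const Complex.continuous_re).mem_nhds hz] with x hx
    simp only [f, Function.comp_apply, cayleyInv_cayley (add_one_ne_zero_of_mem_halfPlane hx),
      cayleyInv_cayley (add_one_ne_zero_of_mem_halfPlane (hFm hx))]
  rw [(hcomp.congr_of_eventuallyEq hF_eq.symm).deriv]
  ring

theorem norm_deriv_sub_one_mul_pow_four_le_of_mapsTo_halfPlane (hF1 : F 1 = 1)
    (h' : ‖deriv F 1‖ < 1) {z : ℂ} (hz : z ∈ HalfPlane)
    (hκ : 4 * ‖1 - deriv F 1‖ ≤ (1 - ‖cayley z‖) ^ 2) :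
    ‖deriv F z - 1‖ * (1 - ‖cayley z‖) ^ 4 ≤ 168 * ‖1 - deriv F 1‖ := by
  set f := cayley ∘ F ∘ cayleyInv
  have hf := differentiableOn_cayley_comp_comp_cayleyInv hF hFm
  have hfm := mapsTo_cayley_comp_comp_cayleyInv hFm
  have hf₀ : f 0 = 0 := by simp [f, cayleyInv, cayley, hF1]
  have hf' : deriv f 0 = deriv F 1 := by
    have h1 : (1 : ℂ) ∈ HalfPlane := show (0 : ℝ) < 1 from one_pos
    have hc : cayley 1 = 0 := by simp [cayley]
    rw [deriv_eq_deriv_cayley_comp_comp_cayleyInv hF hFm h1, hc]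
    change deriv f 0 = deriv f 0 * (1 - 0) ^ 2 / (1 - f 0) ^ 2
    rw [hf₀]
    ring
  have hw := cayley_mapsTo hz
  rw [← hf'] at h' hκ ⊢
  rw [deriv_eq_deriv_cayley_comp_comp_cayleyInv hF hFm hz]
  exact norm_mul_sq_div_sq_sub_one_mul_le (mem_ball_zero_iff.mp hw)
    (norm_deriv_sub_one_mul_le hf hfm hf₀ h' hw) (norm_apply_sub_self_mul_le hf hfm hf₀ h' hw) hκ

end SelfMapOfHalfPlane

theorem normal_families_rigidity :
    ∀ R > (0:ℝ), ∀ ε > (0:ℝ), ∃ δ : ℝ, 0 < δ ∧ δ < 1 ∧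
      ∀ F : ℂ → ℂ, DifferentiableOn ℂ F HalfPlane → MapsTo F HalfPlane HalfPlane →
        F 1 = 1 → (∃ d : ℝ, deriv F 1 = (d : ℂ) ∧ 1 - δ < d ∧ d < 1) →
        ∀ ζ ∈ HalfPlane, hdistH ζ 1 ≤ R → ‖deriv F ζ - 1‖ < ε := by
  intro R hR ε hε
  set t := 2 / (Real.exp R + 1)
  have ht0 : 0 < t := by positivity
  have ht1 : t < 1 := by
    rw [div_lt_one (by positivity)]
    linarith [Real.add_one_lt_exp hR.ne']
  refine ⟨min (t ^ 2 / 4) (ε * t ^ 4 / 168), by positivity,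
    (min_le_left _ _).trans_lt (by nlinarith), ?_⟩
  rintro F hF hFm hF1 ⟨d, hd, hd_lower, hd_upper⟩ ζ hζ hζR
  have hδ₁ := min_le_left (t ^ 2 / 4) (ε * t ^ 4 / 168)
  have hδ₂ := min_le_right (t ^ 2 / 4) (ε * t ^ 4 / 168)
  have hd_pos : 0 < d := by nlinarith
  have hκ : ‖1 - deriv F 1‖ = 1 - d := by
    rw [hd, ← Complex.ofReal_one, ← Complex.ofReal_sub, Complex.norm_real,
      Real.norm_of_nonneg (by linarith)]
  have hρ := two_div_exp_add_one_le_one_sub_norm_cayley hζ hζR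
  have key := norm_deriv_sub_one_mul_pow_four_le_of_mapsTo_halfPlane hF hFm hF1
    (by rwa [hd, Complex.norm_real, Real.norm_of_nonneg hd_pos.le]) hζ
    (by rw [hκ]; nlinarith)
  rw [hκ] at key
  have : ‖deriv F ζ - 1‖ * t ^ 4 < ε * t ^ 4 := by
    calc ‖deriv F ζ - 1‖ * t ^ 4 ≤ ‖deriv F ζ - 1‖ * (1 - ‖cayley ζ‖) ^ 4 := by gcongr
      _ ≤ 168 * (1 - d) := key
      _ < ε * t ^ 4 := by linarith
  exact lt_of_mul_lt_mul_right this (by positivity)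
end

section
/- Let f : 𝕊 → 𝕊 be holomorphic on the strip 𝕊 = {|Im w| < π/2} and set g(w) = f(w) - w. Fix δ ∈ (0, π/2) and ε > 0 and suppose |Im g(w)| < εδ/8 for all w in the half-strip U = {Re w > u₀, |Im w| < π/2 - δ/2}. Then |g'(w)| < ε for every w with Re w > u₀ + δ/2 and |Im w| < π/2 - δ. -/
/-! Composing with `z ↦ exp (π z / (2M))` and a Cayley transform turns a holomorphic map of a
disc of radius `r` into a strip `|Im ζ| < M` into a self-map of the unit disc, so the Schwarz lemma
bounds its derivative at the centre by `4M / (π r)`. On the disc of radius `δ/2` about `w`, which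
lies in the half-strip `U`, this gives `|g'(w)| ≤ ε / π`. -/

open Set Filter

noncomputable def Strip : Set ℂ := {w : ℂ | |w.im| < Real.pi / 2}

open Metric Real

lemma norm_sub_div_add_conj_lt_one {a b : ℂ} (ha : 0 < a.re) (hb : 0 < b.re) :
    ‖(a - b) / (a + (starRingEnd ℂ) b)‖ < 1 := by
  have hne : a + (starRingEnd ℂ) b ≠ 0 := fun h => by
    simpa [h] using (by simp only [Complex.add_re, Complex.conj_re]; linarith :
      0 < (a + (starRingEnd ℂ) b).re)
  rw [norm_div, div_lt_one (norm_pos_iff.mpr hne), ← sq_lt_sq₀ (norm_nonneg _) (norm_nonneg _),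
    Complex.sq_norm, Complex.sq_norm]
  simp only [Complex.normSq_apply, Complex.sub_re, Complex.sub_im, Complex.add_re,
    Complex.add_im, Complex.conj_re, Complex.conj_im]
  nlinarith [mul_pos ha hb]

lemma exp_re_pos_of_abs_im_lt {z : ℂ} (hz : |z.im| < π / 2) : 0 < (Complex.exp z).re := by
  rw [Complex.exp_re]
  exact mul_pos (Real.exp_pos _) (cos_pos_of_mem_Ioo (abs_lt.mp hz))

lemma norm_deriv_le_of_re_pos {F : ℂ → ℂ} {c : ℂ} {r : ℝ}
    (hF : DifferentiableOn ℂ F (ball c r)) (hr : 0 < r) (hre : ∀ z ∈ ball c r, 0 < (F z).re) :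
    ‖deriv F c‖ ≤ 2 * (F c).re / r := by
  have hc : c ∈ ball c r := mem_ball_self hr
  have hFc := hre c hc
  have hden : ∀ z ∈ ball c r, F z + (starRingEnd ℂ) (F c) ≠ 0 := fun z hz h => by
    have := congrArg Complex.re h
    simp only [Complex.add_re, Complex.conj_re, Complex.zero_re] at this
    linarith [hre z hz]
  -- Cayley transform of the right half-plane onto the unit disc, sending `F c` to `0`
  set Φ : ℂ → ℂ := fun z => (F z - F c) / (F z + (starRingEnd ℂ) (F c))
  have hΦ : DifferentiableOn ℂ Φ (ball c r) :=
    (hF.sub_const _).div (hF.add_const _) hden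
  have hΦ_maps : MapsTo Φ (ball c r) (closedBall (Φ c) 1) := fun z hz => by
    simpa [Φ] using (norm_sub_div_add_conj_lt_one (hre z hz) hFc).le
  have hΦ_deriv : HasDerivAt Φ (deriv F c / (2 * (F c).re : ℝ)) c := by
    have hFd := (hF.differentiableAt (isOpen_ball.mem_nhds hc)).hasDerivAt
    refine ((hFd.sub_const (F c)).div (hFd.add_const _) (hden c hc)).congr_deriv ?_
    rw [Complex.add_conj, sub_self, zero_mul, sub_zero, sq, mul_div_mul_right _ _ (by
      exact_mod_cast (by positivity : (2 * (F c).re) ≠ 0))]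
  have hschwarz := Complex.norm_deriv_le_div_of_mapsTo_ball hΦ hΦ_maps hr
  rw [hΦ_deriv.deriv, norm_div, Complex.norm_real, Real.norm_of_nonneg (by positivity),
    div_le_div_iff₀ (by positivity) hr] at hschwarz
  rw [le_div_iff₀ hr]
  linarith

lemma norm_deriv_le_of_abs_im_lt {g : ℂ → ℂ} {c : ℂ} {r M : ℝ}
    (hg : DifferentiableOn ℂ g (ball c r)) (hr : 0 < r)
    (him : ∀ z ∈ ball c r, |(g z).im| < M) :
    ‖deriv g c‖ ≤ 4 * M / (π * r) := by
  have hc : c ∈ ball c r := mem_ball_self hr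
  have hM : 0 < M := (abs_nonneg _).trans_lt (him c hc)
  set k : ℝ := π / (2 * M)
  have hk : 0 < k := by positivity
  have hkM : k * (2 * M) = π := div_mul_cancel₀ _ (by positivity)
  set F : ℂ → ℂ := fun z => Complex.exp (k * g z)
  have hF_re : ∀ z ∈ ball c r, 0 < (F z).re := fun z hz => by
    apply exp_re_pos_of_abs_im_lt
    rw [Complex.im_ofReal_mul, abs_mul, abs_of_pos hk]
    calc k * |(g z).im| < k * M := mul_lt_mul_of_pos_left (him z hz) hk
      _ = π / 2 := by rw [← hkM]; ring
  have hF_deriv : deriv F c = F c * (k * deriv g c) :=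
    (((hg.differentiableAt (isOpen_ball.mem_nhds hc)).hasDerivAt.const_mul (k : ℂ)).cexp).deriv
  have hbound := norm_deriv_le_of_re_pos (F := F) ((hg.const_mul _).cexp) hr hF_re
  rw [hF_deriv, norm_mul, norm_mul, Complex.norm_real, Real.norm_of_nonneg hk.le] at hbound
  have hFc : 0 < ‖F c‖ := (hF_re c hc).trans_le (Complex.re_le_norm _)
  have hkg : k * ‖deriv g c‖ ≤ 2 / r := by
    rw [le_div_iff₀ hr]
    nlinarith [Complex.re_le_norm (F c), (le_div_iff₀ hr).mp hbound]
  calc ‖deriv g c‖ ≤ 2 / r / k := by rw [le_div_iff₀ hk]; linarith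
    _ = 4 * M / (π * r) := by rw [← hkM]; field_simp; ring

lemma ball_subset_halfStrip {w : ℂ} {r a b : ℝ} (hre : a + r ≤ w.re) (him : |w.im| + r ≤ b) :
    ball w r ⊆ {z | a < z.re ∧ |z.im| < b} := fun z hz => by
  rw [mem_ball, Complex.dist_eq] at hz
  have hz_re : |z.re - w.re| < r := (Complex.abs_re_le_norm (z - w)).trans_lt hz
  have hz_im : |z.im - w.im| < r := (Complex.abs_im_le_norm (z - w)).trans_lt hz
  refine ⟨by linarith [(abs_lt.mp hz_re).1], ?_⟩
  linarith [abs_sub_abs_le_abs_sub z.im w.im]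

theorem strip_derivative_estimate_general (f : ℂ → ℂ)
    (hf : DifferentiableOn ℂ f Strip)
    (δ ε u₀ : ℝ) (hδ0 : 0 < δ) (hε : 0 < ε)
    (hIm : ∀ w : ℂ, u₀ < w.re → |w.im| < Real.pi / 2 - δ / 2 →
      |(f w - w).im| < ε * δ / 8) :
    ∀ w : ℂ, u₀ + δ / 2 < w.re → |w.im| < Real.pi / 2 - δ →
      ‖deriv (fun z => f z - z) w‖ < ε := by
  intro w hre him
  have hU : ball w (δ / 2) ⊆ {z | u₀ < z.re ∧ |z.im| < π / 2 - δ / 2} :=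
    ball_subset_halfStrip hre.le (by linarith)
  have hUS : {z : ℂ | u₀ < z.re ∧ |z.im| < π / 2 - δ / 2} ⊆ Strip := fun z hz => by
    simp only [Strip, mem_ofPred_eq]
    linarith [hz.2]
  have hg : DifferentiableOn ℂ (fun z => f z - z) (ball w (δ / 2)) :=
    (hf.mono (hU.trans hUS)).sub differentiableOn_id
  calc ‖deriv (fun z => f z - z) w‖
      ≤ 4 * (ε * δ / 8) / (π * (δ / 2)) :=
        norm_deriv_le_of_abs_im_lt hg (by positivity) fun z hz => hIm z (hU hz).1 (hU hz).2
    _ = ε / π := by field_simp; ring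
    _ < ε := div_lt_self hε (by linarith [pi_gt_three])

theorem strip_derivative_estimate (f : ℂ → ℂ)
    (hf : DifferentiableOn ℂ f Strip)
    (hmapf : MapsTo f Strip Strip)
    (δ ε u₀ : ℝ) (hδ0 : 0 < δ) (hδ : δ < Real.pi / 2) (hε : 0 < ε)
    (hIm : ∀ w : ℂ, u₀ < w.re → |w.im| < Real.pi / 2 - δ / 2 →
      |(f w - w).im| < ε * δ / 8) :
    ∀ w : ℂ, u₀ + δ / 2 < w.re → |w.im| < Real.pi / 2 - δ →
      ‖deriv (fun z => f z - z) w‖ < ε :=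
  strip_derivative_estimate_general f hf δ ε u₀ hδ0 hε hIm
end

section
/- Let φ : 𝔻 → 𝔻 be holomorphic with finite angular derivative at σ ∈ ∂𝔻 in the sense that, in the half-plane model F : ℍ → ℍ (conjugate of φ by the Cayley map sending σ to ∞), F(ζ)/ζ → 1 as ζ → ∞ non-tangentially. Then for ζ₁, ζ₂ ∈ ℍ, 0 ≤ k(ζ₁,ζ₂) - k(F(ζ₁),F(ζ₂)) ≤ k(F(ζ₁),ζ₁) + k(F(ζ₂),ζ₂), and moreover k(F(ζ),ζ) → 0 as ζ → ∞ non-tangentially; hence k(ζ₁,ζ₂) - k(F(ζ₁),F(ζ₂)) → 0 as ζ₁, ζ₂ → ∞ non-tangentially. -/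
open Set Filter

/-- Non-tangential approach to `∞` in the right half-plane within `{|arg ζ| < θ}`. -/
noncomputable def sectorFilter (θ : ℝ) : Filter ℂ :=
  Filter.comap (fun z : ℂ => ‖z‖) Filter.atTop ⊓
    Filter.principal {ζ : ℂ | |Complex.arg ζ| < θ}

/-!
Under `ζ ↦ I ζ` the quantity `pdistH z w` becomes `tanh (d / 2)` for the hyperbolic distance `d`
of the upper half-plane, so `hdistH` is that distance: it is a metric, and by Schwarz–Pick `F`
contracts it. The two-sided bound is then the triangle inequality through `F ζ₁` and `F ζ₂`.
In the sector `|arg ζ| < θ` one has `Re ζ ≥ ‖ζ‖ cos θ`, which bounds `pdistH (F ζ) ζ` by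
`‖F ζ / ζ - 1‖ / cos θ`, and this tends to `0`.
-/

open Complex ComplexConjugate

lemma pdistH_nonneg (z w : ℂ) : 0 ≤ pdistH z w := by
  unfold pdistH; positivity

lemma hdistH_eq_two_mul_artanh {z w : ℂ} (h : pdistH z w ≤ 1) :
    hdistH z w = 2 * Real.artanh (pdistH z w) := by
  rw [Real.artanh_eq_half_log ⟨by linarith [pdistH_nonneg z w], h⟩, hdistH]
  ring

lemma add_conj_ne_zero {z w : ℂ} (hz : z ∈ HalfPlane) (hw : w ∈ HalfPlane) : z + conj w ≠ 0 :=
  fun h => by simpa [h] using (add_pos hz hw).trans_eq (congrArg re h : _)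

namespace HalfPlane

def toUpperHalfPlane {z : ℂ} (hz : z ∈ HalfPlane) : UpperHalfPlane :=
  ⟨I * z, by rw [I_mul_im]; exact hz⟩

lemma pdistH_eq_tanh {z w : ℂ} (hz : z ∈ HalfPlane) (hw : w ∈ HalfPlane) :
    pdistH z w = Real.tanh (dist (toUpperHalfPlane hz) (toUpperHalfPlane hw) / 2) := by
  rw [UpperHalfPlane.tanh_half_dist]
  simp only [toUpperHalfPlane, pdistH, UpperHalfPlane.coe_mk, Complex.dist_eq, map_mul, conj_I]
  rw [← mul_sub, neg_mul, sub_neg_eq_add, ← mul_add, norm_mul, norm_mul, norm_I, one_mul, one_mul]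

lemma hdistH_eq_dist {z w : ℂ} (hz : z ∈ HalfPlane) (hw : w ∈ HalfPlane) :
    hdistH z w = dist (toUpperHalfPlane hz) (toUpperHalfPlane hw) := by
  rw [hdistH_eq_two_mul_artanh, pdistH_eq_tanh hz hw, Real.artanh_tanh]
  · ring
  · rw [pdistH_eq_tanh hz hw]; exact (Real.tanh_lt_one _).le

lemma pdistH_lt_one {z w : ℂ} (hz : z ∈ HalfPlane) (hw : w ∈ HalfPlane) : pdistH z w < 1 := by
  rw [pdistH_eq_tanh hz hw]; exact Real.tanh_lt_one _

end HalfPlane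

noncomputable def cayleyAt (w z : ℂ) : ℂ := (z - w) / (z + conj w)

noncomputable def cayleyAtInv (w u : ℂ) : ℂ := (w + conj w * u) / (1 - u)

lemma norm_cayleyAt (w z : ℂ) : ‖cayleyAt w z‖ = pdistH z w := norm_div _ _

lemma cayleyAt_self (w : ℂ) : cayleyAt w w = 0 := by simp [cayleyAt]

lemma cayleyAt_mem_ball {w z : ℂ} (hw : w ∈ HalfPlane) (hz : z ∈ HalfPlane) :
    cayleyAt w z ∈ Metric.ball (0 : ℂ) 1 := by
  rw [mem_ball_zero_iff, norm_cayleyAt]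
  exact HalfPlane.pdistH_lt_one hz hw

lemma differentiableOn_cayleyAt {w : ℂ} (hw : w ∈ HalfPlane) :
    DifferentiableOn ℂ (cayleyAt w) HalfPlane :=
  (differentiableOn_id.sub_const w).div (differentiableOn_id.add_const _)
    fun _ hz => add_conj_ne_zero hz hw

lemma one_sub_ne_zero_of_mem_ball_s19 {u : ℂ} (hu : u ∈ Metric.ball (0 : ℂ) 1) : 1 - u ≠ 0 := by
  rw [sub_ne_zero]
  rintro rfl
  simp at hu

lemma cayleyAtInv_re (w u : ℂ) :
    (cayleyAtInv w u).re = w.re * (1 - ‖u‖ ^ 2) / ‖1 - u‖ ^ 2 := by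
  rw [cayleyAtInv, div_re, Complex.sq_norm, Complex.sq_norm]
  simp only [normSq_apply, add_re, add_im, mul_re, mul_im, sub_re, sub_im, conj_re, conj_im,
    one_re, one_im]
  ring

lemma cayleyAtInv_mem {w u : ℂ} (hw : w ∈ HalfPlane) (hu : u ∈ Metric.ball (0 : ℂ) 1) :
    cayleyAtInv w u ∈ HalfPlane := by
  have hu1 : ‖u‖ < 1 := mem_ball_zero_iff.mp hu
  have h1u : 0 < ‖1 - u‖ := norm_pos_iff.mpr (one_sub_ne_zero_of_mem_ball_s19 hu)
  show 0 < (cayleyAtInv w u).re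
  rw [cayleyAtInv_re]
  have : 0 < 1 - ‖u‖ ^ 2 := by nlinarith [norm_nonneg u]
  exact div_pos (mul_pos hw this) (pow_pos h1u 2)

lemma differentiableOn_cayleyAtInv (w : ℂ) :
    DifferentiableOn ℂ (cayleyAtInv w) (Metric.ball 0 1) :=
  ((differentiableOn_const w).add (differentiableOn_id.const_mul _)).div
    ((differentiableOn_const 1).sub differentiableOn_id) fun _ => one_sub_ne_zero_of_mem_ball_s19

lemma cayleyAtInv_zero (w : ℂ) : cayleyAtInv w 0 = w := by simp [cayleyAtInv]

lemma cayleyAtInv_cayleyAt {w z : ℂ} (hw : w ∈ HalfPlane) (hz : z ∈ HalfPlane) :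
    cayleyAtInv w (cayleyAt w z) = z := by
  have hzw := add_conj_ne_zero hz hw
  have hww := add_conj_ne_zero hw hw
  rw [cayleyAtInv, cayleyAt, div_eq_iff]
  · field_simp
    ring
  · rw [one_sub_div hzw]
    refine div_ne_zero ?_ hzw
    rwa [show z + conj w - (z - w) = w + conj w by ring]

-- Schwarz–Pick: conjugate `F` by Cayley maps to a self-map of the disc fixing `0`.
theorem pdistH_map_le {F : ℂ → ℂ} (hF : DifferentiableOn ℂ F HalfPlane)
    (hmap : MapsTo F HalfPlane HalfPlane) {z w : ℂ} (hz : z ∈ HalfPlane) (hw : w ∈ HalfPlane) :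
    pdistH (F z) (F w) ≤ pdistH z w := by
  set g := cayleyAt (F w) ∘ F ∘ cayleyAtInv w
  have hmaps : MapsTo (cayleyAtInv w) (Metric.ball 0 1) HalfPlane :=
    fun _ => cayleyAtInv_mem hw
  have hg : DifferentiableOn ℂ g (Metric.ball 0 1) :=
    (differentiableOn_cayleyAt (hmap hw)).comp (hF.comp (differentiableOn_cayleyAtInv w) hmaps)
      (hmap.comp hmaps)
  have hg_maps : MapsTo g (Metric.ball 0 1) (Metric.closedBall 0 1) :=
    fun u hu => Metric.ball_subset_closedBall (cayleyAt_mem_ball (hmap hw) (hmap (hmaps hu)))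
  have hg0 : g 0 = 0 := by simp [g, cayleyAtInv_zero, cayleyAt_self]
  have := Complex.norm_le_norm_of_mapsTo_ball hg hg_maps hg0
    (mem_ball_zero_iff.mp (cayleyAt_mem_ball hw hz))
  simpa only [g, Function.comp_apply, cayleyAtInv_cayleyAt hw hz, norm_cayleyAt] using this

lemma hdistH_le_hdistH_of_pdistH_le {z w z' w' : ℂ} (h : pdistH z' w' ≤ pdistH z w)
    (h1 : pdistH z w < 1) : hdistH z' w' ≤ hdistH z w := by
  rw [hdistH_eq_two_mul_artanh (h.trans h1.le), hdistH_eq_two_mul_artanh h1.le]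
  gcongr
  exact Real.artanh_le_artanh (by linarith [pdistH_nonneg z' w']) h1 h

theorem hdistH_map_le {F : ℂ → ℂ} (hF : DifferentiableOn ℂ F HalfPlane)
    (hmap : MapsTo F HalfPlane HalfPlane) {z w : ℂ} (hz : z ∈ HalfPlane) (hw : w ∈ HalfPlane) :
    hdistH (F z) (F w) ≤ hdistH z w :=
  hdistH_le_hdistH_of_pdistH_le (pdistH_map_le hF hmap hz hw) (HalfPlane.pdistH_lt_one hz hw)

lemma hdistH_sub_hdistH_le {z w z' w' : ℂ} (hz : z ∈ HalfPlane) (hw : w ∈ HalfPlane)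
    (hz' : z' ∈ HalfPlane) (hw' : w' ∈ HalfPlane) :
    hdistH z w - hdistH z' w' ≤ hdistH z' z + hdistH w' w := by
  simp only [HalfPlane.hdistH_eq_dist, *]
  linarith [dist_triangle4 (HalfPlane.toUpperHalfPlane hz) (HalfPlane.toUpperHalfPlane hz')
    (HalfPlane.toUpperHalfPlane hw') (HalfPlane.toUpperHalfPlane hw),
    dist_comm (HalfPlane.toUpperHalfPlane hz) (HalfPlane.toUpperHalfPlane hz')]

lemma pdistH_le_norm_div_sub_one {z ζ : ℂ} {c : ℝ} (hz : 0 ≤ z.re) (hζ : ζ ≠ 0) (hc : 0 < c)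
    (hcζ : c * ‖ζ‖ ≤ ζ.re) : pdistH z ζ ≤ ‖z / ζ - 1‖ / c := by
  have hnum : ‖z - ζ‖ = ‖ζ‖ * ‖z / ζ - 1‖ := by
    rw [← norm_mul, mul_sub, mul_div_cancel₀ _ hζ, mul_one]
  have hden : c * ‖ζ‖ ≤ ‖z + conj ζ‖ := by
    have := re_le_norm (z + conj ζ)
    rw [add_re, conj_re] at this
    linarith
  have hζpos : 0 < ‖ζ‖ := norm_pos_iff.mpr hζ
  calc pdistH z ζ ≤ ‖ζ‖ * ‖z / ζ - 1‖ / (c * ‖ζ‖) := by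
        rw [pdistH, hnum]
        gcongr
    _ = ‖z / ζ - 1‖ / c := by
        rw [mul_comm c, mul_div_mul_left _ _ hζpos.ne']

lemma tendsto_hdistH_zero {α : Type*} {l : Filter α} {f g : α → ℂ}
    (h : Tendsto (fun x => pdistH (f x) (g x)) l (nhds 0)) :
    Tendsto (fun x => hdistH (f x) (g x)) l (nhds 0) := by
  have hcont : ContinuousAt (fun t : ℝ => Real.log ((1 + t) / (1 - t))) 0 :=
    ((continuousAt_const.add continuousAt_id).div (continuousAt_const.sub continuousAt_id)
      (by norm_num)).log (by norm_num)
  simpa [Function.comp_def, hdistH] using hcont.tendsto.comp h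

lemma eventually_sectorFilter {θ : ℝ} (hθ : θ ≤ Real.pi) :
    ∀ᶠ ζ in sectorFilter θ, ζ ≠ 0 ∧ Real.cos θ * ‖ζ‖ ≤ ζ.re := by
  rw [sectorFilter, eventually_inf_principal]
  filter_upwards [tendsto_comap.eventually (eventually_gt_atTop 0)] with ζ hζ harg
  have hζ0 : ζ ≠ 0 := norm_pos_iff.mp hζ
  refine ⟨hζ0, ?_⟩
  rw [← Complex.norm_mul_cos_arg ζ, mul_comm, ← Real.cos_abs (arg ζ)]
  gcongr
  exact Real.cos_le_cos_of_nonneg_of_le_pi (abs_nonneg _) hθ harg.le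

lemma eventually_mem_halfPlane_sectorFilter {θ : ℝ} (hθ : θ ≤ Real.pi / 2) :
    ∀ᶠ ζ in sectorFilter θ, ζ ∈ HalfPlane := by
  rw [sectorFilter, eventually_inf_principal]
  filter_upwards [tendsto_comap.eventually (eventually_gt_atTop 0)] with ζ hζ harg
  exact (abs_arg_lt_pi_div_two_iff.mp (harg.trans_le hθ)).resolve_right (norm_pos_iff.mp hζ)

theorem tendsto_hdistH_map_self_sectorFilter {F : ℂ → ℂ} (hmap : MapsTo F HalfPlane HalfPlane)
    {θ : ℝ} (hθ : 0 < θ) (hθ' : θ < Real.pi / 2)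
    (hder : Tendsto (fun ζ : ℂ => F ζ / ζ) (sectorFilter θ) (nhds 1)) :
    Tendsto (fun ζ : ℂ => hdistH (F ζ) ζ) (sectorFilter θ) (nhds 0) := by
  have hcos : 0 < Real.cos θ := Real.cos_pos_of_mem_Ioo ⟨by linarith, hθ'⟩
  refine tendsto_hdistH_zero (squeeze_zero' (g := fun ζ => ‖F ζ / ζ - 1‖ / Real.cos θ)
    (.of_forall fun _ => pdistH_nonneg _ _) ?_ ?_)
  · filter_upwards [eventually_sectorFilter (by linarith [Real.pi_pos]),
      eventually_mem_halfPlane_sectorFilter hθ'.le] with ζ ⟨hζ0, hζre⟩ hζ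
    exact pdistH_le_norm_div_sub_one (hmap hζ).le hζ0 hcos hζre
  · simpa using (hder.sub_const 1).norm.div_const (Real.cos θ)

theorem defect_tendsto_zero_of_angular_derivative_one (F : ℂ → ℂ)
    (hF : DifferentiableOn ℂ F HalfPlane)
    (hmap : MapsTo F HalfPlane HalfPlane)
    (hder : ∀ θ : ℝ, 0 < θ → θ < Real.pi / 2 →
      Tendsto (fun ζ : ℂ => F ζ / ζ) (sectorFilter θ) (nhds 1)) :
    (∀ ζ₁ ∈ HalfPlane, ∀ ζ₂ ∈ HalfPlane,
        0 ≤ hdistH ζ₁ ζ₂ - hdistH (F ζ₁) (F ζ₂)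
        ∧ hdistH ζ₁ ζ₂ - hdistH (F ζ₁) (F ζ₂)
            ≤ hdistH (F ζ₁) ζ₁ + hdistH (F ζ₂) ζ₂)
    ∧ (∀ θ : ℝ, 0 < θ → θ < Real.pi / 2 →
        Tendsto (fun ζ : ℂ => hdistH (F ζ) ζ) (sectorFilter θ) (nhds 0))
    ∧ (∀ θ : ℝ, 0 < θ → θ < Real.pi / 2 →
        Tendsto (fun p : ℂ × ℂ => hdistH p.1 p.2 - hdistH (F p.1) (F p.2))
          (sectorFilter θ ×ˢ sectorFilter θ) (nhds 0)) := by
  have bounds : ∀ ζ₁ ∈ HalfPlane, ∀ ζ₂ ∈ HalfPlane,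
      0 ≤ hdistH ζ₁ ζ₂ - hdistH (F ζ₁) (F ζ₂)
      ∧ hdistH ζ₁ ζ₂ - hdistH (F ζ₁) (F ζ₂) ≤ hdistH (F ζ₁) ζ₁ + hdistH (F ζ₂) ζ₂ :=
    fun ζ₁ h₁ ζ₂ h₂ => ⟨sub_nonneg.mpr (hdistH_map_le hF hmap h₁ h₂),
      hdistH_sub_hdistH_le h₁ h₂ (hmap h₁) (hmap h₂)⟩
  have hself θ hθ hθ' := tendsto_hdistH_map_self_sectorFilter hmap hθ hθ' (hder θ hθ hθ')
  refine ⟨bounds, hself, fun θ hθ hθ' => ?_⟩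
  have hH := eventually_mem_halfPlane_sectorFilter hθ'.le
  have hpair := (tendsto_fst.eventually hH).and (tendsto_snd.eventually hH)
  refine tendsto_of_tendsto_of_tendsto_of_le_of_le' tendsto_const_nhds ?_
    (hpair.mono fun p hp => (bounds _ hp.1 _ hp.2).1) (hpair.mono fun p hp => (bounds _ hp.1 _ hp.2).2)
  simpa using ((hself θ hθ hθ').comp tendsto_fst).add ((hself θ hθ hθ').comp tendsto_snd)
end
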